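/- Let Ĝ = (V, Ê) be a connected graph on vertices V = {1, …, N+1} with positive susceptances b_e (reactances x_e = 1/b_e) on its edges, and let L̃_f be the reduced susceptance Laplacian of Ĝ (the Laplacian with the row and column of the reference node 1 removed), which is positive definite. Suppose the edge ℓ = {i, j}, with i, j ≠ 1, is a bridge of Ĝ. Then for every connected spanning edge set E ⊆ Ê, the inverse X = L̃(E)^{-1} of the reduced susceptance Laplacian of (V, E) satisfies X_{ij} ≥ ([L̃_f^{-1}]_{ii} + [L̃_f^{-1}]_{jj} − x_ℓ)/2, where x_ℓ is the reactance of edge ℓ. -/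

import Mathlib

open Matrix

/-- The reduced incidence vector of the ordered pair of nodes `(u, v)` of a
power network on `N + 1` nodes, with node `0` taken as the reference node: the
entry at position `p : Fin N` corresponds to node `p.succ` and equals `+1` if
`p.succ = u`, `−1` if `p.succ = v`, and `0` otherwise. -/
def reducedIncidence (N : ℕ) (u v : Fin (N + 1)) : Fin N → ℝ :=
  fun p => (if (p.succ : Fin (N + 1)) = u then (1 : ℝ) else 0) -
    (if (p.succ : Fin (N + 1)) = v then (1 : ℝ) else 0)

open scoped Classical in
/-- The reduced susceptance Laplacian `L̃ = Σ_{(u,v)∈E} b_{uv}·a_{uv}·a_{uv}ᵀ`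
of a graph `H` on `N + 1` nodes with susceptances `b`, with the row and column
of the reference node `0` removed (each unordered edge is counted twice in the
double sum, whence the factor `1/2`). -/
noncomputable def reducedLaplacian (N : ℕ) (H : SimpleGraph (Fin (N + 1)))
    (b : Fin (N + 1) → Fin (N + 1) → ℝ) : Matrix (Fin N) (Fin N) ℝ :=
  (1 / 2 : ℝ) • ∑ u : Fin (N + 1), ∑ v : Fin (N + 1),
    (if H.Adj u v then b u v else 0) •
      Matrix.vecMulVec (reducedIncidence N u v) (reducedIncidence N u v)


/-!
With `X = L̃(H)⁻¹` and `a` the reduced incidence vector of `ℓ`, the effective resistance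
`aᵀ X a = X i i + X j j − 2 X i j` is at most the reactance `1 / b ℓ`: being a bridge, `ℓ` is an
edge of every connected spanning subgraph `H`, so `b ℓ • a aᵀ ⪯ L̃(H)`, and `c • a aᵀ ⪯ L` forces
`aᵀ L⁻¹ a ≤ c⁻¹`. On the other hand `H ≤ Ĝ` gives `L̃(H) ⪯ L̃_f` in the Loewner order, and
inversion reverses that order on positive definite matrices, so `X i i ≥ [L̃_f⁻¹] i i` and
`X j j ≥ [L̃_f⁻¹] j j`.
-/

open scoped MatrixOrder

namespace Matrix

variable {n : Type*} [Fintype n]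

lemma IsHermitian.dotProduct_mulVec_comm {A : Matrix n n ℝ} (hA : A.IsHermitian) (x y : n → ℝ) :
    x ⬝ᵥ (A *ᵥ y) = (A *ᵥ x) ⬝ᵥ y := by
  rw [dotProduct_mulVec, ← mulVec_transpose, ← conjTranspose_eq_transpose_of_trivial, hA.eq,
    dotProduct_comm]

lemma dotProduct_vecMulVec_self_mulVec (a x : n → ℝ) :
    x ⬝ᵥ (vecMulVec a a *ᵥ x) = (x ⬝ᵥ a) ^ 2 := by
  rw [dotProduct_mulVec, vecMul_vecMulVec, smul_dotProduct, dotProduct_comm a x, smul_eq_mul, sq]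

variable [DecidableEq n] {A B : Matrix n n ℝ}

lemma single_sub_single_dotProduct_mulVec {R : Type*} [CommRing R] (M : Matrix n n R) (i j : n) :
    (Pi.single i 1 - Pi.single j 1) ⬝ᵥ (M *ᵥ (Pi.single i 1 - Pi.single j 1))
      = M i i - M i j - M j i + M j j := by
  simp only [mulVec_sub, mulVec_single, MulOpposite.op_one, one_smul, dotProduct_sub,
    sub_dotProduct, single_dotProduct, col_apply, one_mul]
  ring

lemma PosDef.mulVec_inv_mulVec (hA : A.PosDef) (e : n → ℝ) : A *ᵥ (A⁻¹ *ᵥ e) = e := by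
  rw [mulVec_mulVec, mul_nonsing_inv _ hA.det_pos.ne'.isUnit, one_mulVec]

/-- The quadratic form of `A⁻¹` is the Legendre dual of that of `A`:
`eᵀA⁻¹e = max_y (2 yᵀe − yᵀAy)`, attained at `y = A⁻¹e`. -/
lemma PosDef.two_mul_dotProduct_sub_le_dotProduct_inv_mulVec (hA : A.PosDef) (e y : n → ℝ) :
    2 * (y ⬝ᵥ e) - y ⬝ᵥ (A *ᵥ y) ≤ e ⬝ᵥ (A⁻¹ *ᵥ e) := by
  set w := A⁻¹ *ᵥ e
  have hAw : A *ᵥ w = e := hA.mulVec_inv_mulVec e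
  have hsq : 0 ≤ (y - w) ⬝ᵥ (A *ᵥ (y - w)) := by
    simpa using hA.posSemidef.dotProduct_mulVec_nonneg (y - w)
  have hwy : w ⬝ᵥ (A *ᵥ y) = y ⬝ᵥ e := by
    rw [hA.isHermitian.dotProduct_mulVec_comm, hAw, dotProduct_comm]
  rw [mulVec_sub, dotProduct_sub, sub_dotProduct, sub_dotProduct, hwy, hAw, dotProduct_comm w e]
    at hsq
  linarith

lemma PosDef.inv_le_inv (hA : A.PosDef) (hAB : A ≤ B) : B⁻¹ ≤ A⁻¹ := by
  have hB : B.PosDef := by simpa using hA.add_posSemidef (le_iff.mp hAB)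
  refine le_iff.mpr (.of_dotProduct_mulVec_nonneg (hA.inv.isHermitian.sub hB.inv.isHermitian)
    fun e => ?_)
  set y := B⁻¹ *ᵥ e
  have hAy : y ⬝ᵥ (A *ᵥ y) ≤ y ⬝ᵥ (B *ᵥ y) := by
    simpa [sub_mulVec] using (le_iff.mp hAB).dotProduct_mulVec_nonneg y
  have hBy : y ⬝ᵥ (B *ᵥ y) = y ⬝ᵥ e := by rw [hB.mulVec_inv_mulVec]
  have hdual := hA.two_mul_dotProduct_sub_le_dotProduct_inv_mulVec e y
  rw [star_trivial, sub_mulVec, dotProduct_sub, sub_nonneg, dotProduct_comm e y]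
  linarith

lemma PosDef.dotProduct_inv_mulVec_le_of_smul_vecMulVec_le (hA : A.PosDef) {c : ℝ} (hc : 0 < c)
    {a : n → ℝ} (h : c • vecMulVec a a ≤ A) : a ⬝ᵥ (A⁻¹ *ᵥ a) ≤ c⁻¹ := by
  set y := A⁻¹ *ᵥ a
  set t := a ⬝ᵥ y
  have ht : 0 ≤ t := by simpa using hA.inv.posSemidef.dotProduct_mulVec_nonneg a
  have hAy : y ⬝ᵥ (A *ᵥ y) = t := by rw [hA.mulVec_inv_mulVec, dotProduct_comm]
  have hcy : y ⬝ᵥ ((c • vecMulVec a a) *ᵥ y) = c * t ^ 2 := by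
    rw [smul_mulVec, dotProduct_smul, dotProduct_vecMulVec_self_mulVec, dotProduct_comm y a,
      smul_eq_mul]
  have hquad := (le_iff.mp h).dotProduct_mulVec_nonneg y
  rw [star_trivial, sub_mulVec, dotProduct_sub, hAy, hcy] at hquad
  rw [← one_div, le_div_iff₀ hc]
  nlinarith

end Matrix

namespace SimpleGraph

variable {V : Type*} {G H : SimpleGraph V} {u v : V}

lemma IsBridge.adj_of_le_of_reachable (hG : G.IsBridge s(u, v)) (hle : H ≤ G)
    (h : H.Reachable u v) : H.Adj u v := by
  by_contra hnadj
  refine isBridge_iff.mp hG (h.mono fun x y hxy => ?_)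
  refine (deleteEdges_adj ..).mpr ⟨hle hxy, fun he => hnadj ?_⟩
  rcases Sym2.eq_iff.mp he with ⟨rfl, rfl⟩ | ⟨rfl, rfl⟩
  exacts [hxy, hxy.symm]

lemma Reachable.eq_of_forall_adj {β : Type*} {f : V → β} (hf : ∀ x y, G.Adj x y → f x = f y)
    (h : G.Reachable u v) : f u = f v := by
  obtain ⟨w⟩ := h
  induction w with
  | nil => rfl
  | cons hadj _ ih => exact (hf _ _ hadj).trans ih

end SimpleGraph

section ReducedLaplacian

variable {N : ℕ} {G H : SimpleGraph (Fin (N + 1))} {b : Fin (N + 1) → Fin (N + 1) → ℝ}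

lemma reducedIncidence_swap (u v : Fin (N + 1)) :
    reducedIncidence N v u = -reducedIncidence N u v := by
  ext p
  simp [reducedIncidence]

lemma reducedIncidence_succ_succ (i j : Fin N) :
    reducedIncidence N i.succ j.succ = Pi.single i 1 - Pi.single j 1 := by
  ext p
  simp [reducedIncidence, Pi.single_apply]

/-- `Fin.cons 0 x` is the vector of node potentials, the reference node being grounded. -/
lemma dotProduct_reducedIncidence (x : Fin N → ℝ) (u v : Fin (N + 1)) :
    x ⬝ᵥ reducedIncidence N u v
      = (Fin.cons 0 x : Fin (N + 1) → ℝ) u - (Fin.cons 0 x : Fin (N + 1) → ℝ) v := by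
  induction u using Fin.cases <;> induction v using Fin.cases <;>
    simp [reducedIncidence, dotProduct, mul_sub, Finset.sum_sub_distrib]

open scoped Classical in
lemma dotProduct_reducedLaplacian_mulVec (x : Fin N → ℝ) :
    x ⬝ᵥ (reducedLaplacian N H b *ᵥ x) = 1 / 2 * ∑ u, ∑ v, (if H.Adj u v then b u v else 0) *
      ((Fin.cons 0 x : Fin (N + 1) → ℝ) u - (Fin.cons 0 x : Fin (N + 1) → ℝ) v) ^ 2 := by
  simp only [reducedLaplacian, smul_mulVec, sum_mulVec, dotProduct_smul, dotProduct_sum,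
    dotProduct_vecMulVec_self_mulVec, dotProduct_reducedIncidence, smul_eq_mul]

lemma reducedLaplacian_nonneg (hb : ∀ u v, H.Adj u v → 0 ≤ b u v) :
    0 ≤ reducedLaplacian N H b := by
  unfold reducedLaplacian
  refine smul_nonneg (by norm_num) (Finset.sum_nonneg fun u _ => Finset.sum_nonneg fun v _ =>
    smul_nonneg ?_ (posSemidef_vecMulVec_self_star _).nonneg)
  split_ifs with h
  exacts [hb u v h, le_rfl]

lemma reducedLaplacian_mono (hle : H ≤ G) (hb : ∀ u v, G.Adj u v → 0 ≤ b u v) :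
    reducedLaplacian N H b ≤ reducedLaplacian N G b := by
  unfold reducedLaplacian
  gcongr with u _ v _
  · exact (posSemidef_vecMulVec_self_star _).nonneg
  · split_ifs with hH hG hG
    exacts [le_rfl, absurd (hle hH) hG, hb u v hG, le_rfl]

open scoped Classical in
/-- Each edge `{u, v}` enters the double sum defining the reduced Laplacian twice,
as `(u, v)` and as `(v, u)`, with the same contribution. -/
lemma smul_vecMulVec_reducedIncidence_le_reducedLaplacian
    (hb : ∀ u v, H.Adj u v → 0 ≤ b u v) (hb_symm : ∀ u v, b u v = b v u) {u v : Fin (N + 1)}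
    (huv : H.Adj u v) :
    b u v • vecMulVec (reducedIncidence N u v) (reducedIncidence N u v)
      ≤ reducedLaplacian N H b := by
  set f : Fin (N + 1) × Fin (N + 1) → Matrix (Fin N) (Fin N) ℝ := fun p =>
    (if H.Adj p.1 p.2 then b p.1 p.2 else 0) •
      vecMulVec (reducedIncidence N p.1 p.2) (reducedIncidence N p.1 p.2)
  have hf_nonneg : ∀ p, 0 ≤ f p := fun p => by
    refine smul_nonneg ?_ (posSemidef_vecMulVec_self_star _).nonneg
    split_ifs with h
    exacts [hb _ _ h, le_rfl]
  have hf_swap : f (v, u) = f (u, v) := by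
    simp [f, huv, huv.symm, hb_symm v u, reducedIncidence_swap u v]
  have hpair : f (u, v) + f (v, u) ≤ ∑ p, f p := by
    rw [← Finset.sum_pair fun h => huv.ne (Prod.ext_iff.mp h).1]
    exact Finset.sum_le_sum_of_subset_of_nonneg (Finset.subset_univ _)
      fun p _ _ => hf_nonneg p
  calc b u v • vecMulVec (reducedIncidence N u v) (reducedIncidence N u v)
      = (1 / 2 : ℝ) • (f (u, v) + f (v, u)) := by
        rw [hf_swap, ← two_smul ℝ, smul_smul]
        simp [f, huv]
    _ ≤ (1 / 2 : ℝ) • ∑ p, f p := smul_le_smul_of_nonneg_left hpair (by norm_num)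
    _ = reducedLaplacian N H b := by rw [reducedLaplacian, ← Fintype.sum_prod_type']

open scoped Classical in
lemma reducedLaplacian_posDef (hb : ∀ u v, H.Adj u v → 0 < b u v) (hH : H.Connected) :
    (reducedLaplacian N H b).PosDef := by
  have hpsd := (reducedLaplacian_nonneg fun u v h => (hb u v h).le).posSemidef
  refine .of_dotProduct_mulVec_pos hpsd.isHermitian fun x hx => ?_
  rw [star_trivial]
  refine lt_of_le_of_ne (by simpa using hpsd.dotProduct_mulVec_nonneg x) fun h0 => hx ?_
  rw [dotProduct_reducedLaplacian_mulVec] at h0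
  set xh : Fin (N + 1) → ℝ := Fin.cons 0 x
  have hterm : ∀ u v, 0 ≤ (if H.Adj u v then b u v else 0) * (xh u - xh v) ^ 2 := fun u v => by
    split_ifs with h
    exacts [mul_nonneg (hb u v h).le (sq_nonneg _), by simp]
  have hzero : ∀ u v, (if H.Adj u v then b u v else 0) * (xh u - xh v) ^ 2 = 0 := fun u v => by
    have hrow := (Fintype.sum_eq_zero_iff_of_nonneg fun u => Finset.sum_nonneg fun v _ =>
      hterm u v).mp (by linarith)
    exact congrFun ((Fintype.sum_eq_zero_iff_of_nonneg (hterm u)).mp (congrFun hrow u)) v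
  have hconst : ∀ u v, H.Adj u v → xh u = xh v := fun u v huv => by
    simpa [huv, (hb u v huv).ne', sub_eq_zero] using hzero u v
  funext p
  simpa [xh] using ((hH.preconnected 0 p.succ).eq_of_forall_adj hconst).symm

end ReducedLaplacian

theorem bridge_offdiag_lower_bound_general (N : ℕ)
    (Ghat : SimpleGraph (Fin (N + 1)))
    (b : Fin (N + 1) → Fin (N + 1) → ℝ)
    (hb_symm : ∀ u v, b u v = b v u)
    (hb_pos : ∀ u v, Ghat.Adj u v → 0 < b u v)
    (i j : Fin N)
    (hbridge : Ghat.IsBridge s(i.succ, j.succ))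
    (H : SimpleGraph (Fin (N + 1))) (hle : H ≤ Ghat) (hHconn : H.Connected) :
    ((reducedLaplacian N Ghat b)⁻¹ i i + (reducedLaplacian N Ghat b)⁻¹ j j
        - 1 / b i.succ j.succ) / 2 ≤ (reducedLaplacian N H b)⁻¹ i j := by
  have hbH : ∀ u v, H.Adj u v → 0 < b u v := fun u v h => hb_pos u v (hle h)
  have hLH : (reducedLaplacian N H b).PosDef := reducedLaplacian_posDef hbH hHconn
  set X := (reducedLaplacian N H b)⁻¹
  have hinv : (reducedLaplacian N Ghat b)⁻¹ ≤ X :=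
    hLH.inv_le_inv (reducedLaplacian_mono hle fun u v h => (hb_pos u v h).le)
  have hii := (le_iff.mp hinv).diag_nonneg (i := i)
  have hjj := (le_iff.mp hinv).diag_nonneg (i := j)
  have hℓ : H.Adj i.succ j.succ := hbridge.adj_of_le_of_reachable hle (hHconn.preconnected _ _)
  have hres := hLH.dotProduct_inv_mulVec_le_of_smul_vecMulVec_le (hbH _ _ hℓ)
    (smul_vecMulVec_reducedIncidence_le_reducedLaplacian (fun u v h => (hbH u v h).le) hb_symm hℓ)
  rw [reducedIncidence_succ_succ, single_sub_single_dotProduct_mulVec] at hres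
  have hsymm : X j i = X i j := hLH.inv.isHermitian.apply i j
  simp only [Matrix.sub_apply, sub_nonneg] at hii hjj
  rw [one_div]
  linarith

/-- paper's Corollary 1, inequality (10) with `ε = 0`: for a
connected candidate graph `Ĝ` on nodes `{0, …, N}` (reference node `0`) with
positive susceptances `b` on its edges and positive definite reduced Laplacian
`L̃_f`, if the edge `ℓ = {i.succ, j.succ}` (not touching the reference node) is
a bridge of `Ĝ`, then for every connected spanning subgraph of `Ĝ`, the inverse
`X` of its reduced susceptance Laplacian satisfies
`X i j ≥ ([L̃_f⁻¹] i i + [L̃_f⁻¹] j j − x_ℓ)/2`, where `x_ℓ = 1/b` is the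
reactance of the edge `ℓ`. -/
theorem bridge_offdiag_lower_bound (N : ℕ)
    (Ghat : SimpleGraph (Fin (N + 1))) (hconn : Ghat.Connected)
    (b : Fin (N + 1) → Fin (N + 1) → ℝ)
    (hb_symm : ∀ u v, b u v = b v u)
    (hb_pos : ∀ u v, Ghat.Adj u v → 0 < b u v)
    (hLf : (reducedLaplacian N Ghat b).PosDef)
    (i j : Fin N)
    (hbridge : Ghat.IsBridge s(i.succ, j.succ))
    (H : SimpleGraph (Fin (N + 1))) (hle : H ≤ Ghat) (hHconn : H.Connected) :
    ((reducedLaplacian N Ghat b)⁻¹ i i + (reducedLaplacian N Ghat b)⁻¹ j j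
        - 1 / b i.succ j.succ) / 2 ≤ (reducedLaplacian N H b)⁻¹ i j :=
  bridge_offdiag_lower_bound_general N Ghat b hb_symm hb_pos i j hbridge H hle hHconn
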